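/- Let F : ℝ^p → ℝ be convex and differentiable, r : ℝ^p → ℝ convex, η > 0, and x* any point. Given x and a vector v, let x⁺ = prox_{ηr}(x − ηv) and g = (1/η)(x − x⁺). Then ‖x⁺ − x*‖² ≤ ‖x − x*‖² − 2η[(F + r)(x⁺) − (F + r)(x*)] − 2η⟨v − ∇F(x), x⁺ − x*⟩, provided F is L-smooth with η ≤ 1/L and F + r is convex (this is the one-step inequality underlying the SVRG analysis). -/

import Mathlib

/-!
Three standard inequalities combine. The proximal point `x⁺` minimizes the 1-strongly convex
function `u ↦ ½‖u - (x - ηv)‖² + η r u`, so its value at `x*` exceeds its value at `x⁺` by at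
least `½‖x* - x⁺‖²`. Convexity of `F` bounds `F x*` from below by its linearization at `x`, and
`L`-smoothness bounds `F x⁺` from above by the same linearization plus `(L/2)‖x⁺ - x‖²`. Adding
these, the term `ηL‖x⁺ - x‖²` is absorbed by the `‖x⁺ - x‖²` coming from the proximal step
because `ηL ≤ 1`.
-/

open scoped RealInnerProductSpace NNReal
open Set Filter Topology

lemma le_add_deriv_add_of_deriv_le_add_mul {g g' : ℝ → ℝ} {K : ℝ}
    (hg : ∀ t, HasDerivAt g (g' t) t) (hg' : ∀ t ∈ Ioo (0 : ℝ) 1, g' t ≤ g' 0 + K * t) :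
    g 1 ≤ g 0 + g' 0 + K / 2 := by
  set ψ : ℝ → ℝ := fun t => g t - t * g' 0 - K / 2 * t ^ 2
  have hψ : ∀ t, HasDerivAt ψ (g' t - g' 0 - K * t) t := fun t => by
    refine (((hg t).sub ((hasDerivAt_id' t).mul_const (g' 0))).sub
      ((hasDerivAt_pow 2 t).const_mul (K / 2))).congr_deriv ?_
    push_cast
    ring
  have hanti : AntitoneOn ψ (Icc 0 1) := by
    refine antitoneOn_of_hasDerivWithinAt_nonpos (convex_Icc 0 1)
      (continuous_iff_continuousAt.2 fun t => (hψ t).continuousAt).continuousOn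
      (fun t _ => (hψ t).hasDerivWithinAt) ?_
    rw [interior_Icc]
    intro t ht
    linarith [hg' t ht]
  have := hanti (left_mem_Icc.2 zero_le_one) (right_mem_Icc.2 zero_le_one) zero_le_one
  simp only [ψ] at this
  linarith

variable {E : Type*} [NormedAddCommGroup E] [InnerProductSpace ℝ E]

lemma norm_sub_sub_smul_sq (a x v : E) (η : ℝ) :
    ‖a - (x - η • v)‖ ^ 2 = ‖a - x‖ ^ 2 + 2 * η * ⟪v, a - x⟫ + η ^ 2 * ‖v‖ ^ 2 := by
  rw [sub_sub_eq_add_sub, add_sub_right_comm, norm_add_sq_real, real_inner_smul_right,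
    norm_smul, Real.norm_eq_abs, mul_pow, sq_abs, real_inner_comm]
  ring

section Prox

variable {φ : E → ℝ} {x y : E}

lemma ConvexOn.inner_sub_add_sub_nonneg_of_isMinOn (hφ : ConvexOn ℝ univ φ)
    (hx : IsMinOn (fun u => 1 / 2 * ‖u - y‖ ^ 2 + φ u) univ x) (u : E) :
    0 ≤ ⟪x - y, u - x⟫ + (φ u - φ x) := by
  set d := u - x
  -- compare `x` with the points `x + t • d` of the segment towards `u`, then let `t → 0`
  have hsmall : ∀ t ∈ Ioo (0 : ℝ) 1, -(t / 2 * ‖d‖ ^ 2) ≤ ⟪x - y, d⟫ + (φ u - φ x) := by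
    intro t ht
    have hmin : 1 / 2 * ‖x - y‖ ^ 2 + φ x ≤ 1 / 2 * ‖x + t • d - y‖ ^ 2 + φ (x + t • d) :=
      isMinOn_univ_iff.1 hx _
    have hconv : φ (x + t • d) ≤ (1 - t) * φ x + t * φ u := by
      have hxt : x + t • d = (1 - t) • x + t • u := by
        simp only [d, smul_sub, sub_smul, one_smul]; abel
      simpa [hxt] using hφ.2 (mem_univ x) (mem_univ u) (by linarith [ht.2]) ht.1.le (by ring)
    have hexpand : ‖x + t • d - y‖ ^ 2 = ‖x - y‖ ^ 2 + 2 * t * ⟪x - y, d⟫ + t ^ 2 * ‖d‖ ^ 2 := by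
      rw [add_sub_right_comm, norm_add_sq_real, real_inner_smul_right, norm_smul,
        Real.norm_eq_abs, mul_pow, sq_abs]
      ring
    rw [hexpand] at hmin
    have : 0 ≤ t * (⟪x - y, d⟫ + (φ u - φ x) + t / 2 * ‖d‖ ^ 2) := by nlinarith
    nlinarith [(mul_nonneg_iff_of_pos_left ht.1).1 this]
  have hlim : Tendsto (fun t : ℝ => -(t / 2 * ‖d‖ ^ 2)) (𝓝[>] 0) (𝓝 0) := by
    have : Tendsto (fun t : ℝ => -(t / 2 * ‖d‖ ^ 2)) (𝓝 0) (𝓝 (-(0 / 2 * ‖d‖ ^ 2))) :=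
      (((continuous_id.div_const 2).mul continuous_const).neg).tendsto 0
    simpa using this.mono_left nhdsWithin_le_nhds
  exact le_of_tendsto hlim (eventually_of_mem (Ioo_mem_nhdsGT zero_lt_one) hsmall)

lemma ConvexOn.half_sq_norm_add_le_of_isMinOn (hφ : ConvexOn ℝ univ φ)
    (hx : IsMinOn (fun u => 1 / 2 * ‖u - y‖ ^ 2 + φ u) univ x) (u : E) :
    1 / 2 * ‖x - y‖ ^ 2 + φ x + 1 / 2 * ‖u - x‖ ^ 2 ≤ 1 / 2 * ‖u - y‖ ^ 2 + φ u := by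
  have hvi := hφ.inner_sub_add_sub_nonneg_of_isMinOn hx u
  have hexpand : ‖u - y‖ ^ 2 = ‖u - x‖ ^ 2 + 2 * ⟪x - y, u - x⟫ + ‖x - y‖ ^ 2 := by
    rw [← sub_add_sub_cancel u x y, norm_add_sq_real, real_inner_comm]
  linarith

end Prox

section Gradient

variable [CompleteSpace E] {f : E → ℝ}

lemma HasGradientAt.hasDerivAt_comp_add_smul {g z d : E} {t : ℝ}
    (hf : HasGradientAt f g (z + t • d)) :
    HasDerivAt (fun s : ℝ => f (z + s • d)) ⟪g, d⟫ t := by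
  have hline : HasDerivAt (fun s : ℝ => z + s • d) d t := by
    simpa using ((hasDerivAt_id t).smul_const d).const_add z
  simpa [Function.comp_def] using (hasGradientAt_iff_hasFDerivAt.mp hf).comp_hasDerivAt t hline

lemma ConvexOn.add_inner_gradient_le {g z : E} (hf : ConvexOn ℝ univ f)
    (hg : HasGradientAt f g z) (w : E) : f z + ⟪g, w - z⟫ ≤ f w := by
  have hline : ConvexOn ℝ univ (fun s : ℝ => f (z + s • (w - z))) := by
    simpa [Function.comp_def, AffineMap.lineMap_apply_module', add_comm] using
      hf.comp_affineMap (AffineMap.lineMap z w)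
  have := hline.le_slope_of_hasDerivAt (mem_univ 0) (mem_univ 1) zero_lt_one
    (HasGradientAt.hasDerivAt_comp_add_smul (d := w - z) (t := 0) (by simpa using hg))
  simp only [slope_def_field, one_smul, add_sub_cancel, zero_smul, add_zero, sub_zero,
    div_one] at this
  linarith

variable {f' : E → E} {L : ℝ≥0}

lemma le_add_inner_gradient_add_sq_of_lipschitzWith (hf : ∀ x, HasGradientAt f (f' x) x)
    (hL : LipschitzWith L f') (z w : E) :
    f w ≤ f z + ⟪f' z, w - z⟫ + L / 2 * ‖w - z‖ ^ 2 := by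
  set d := w - z
  have hderiv : ∀ t : ℝ, HasDerivAt (fun s : ℝ => f (z + s • d)) ⟪f' (z + t • d), d⟫ t :=
    fun t => (hf _).hasDerivAt_comp_add_smul
  have hslope : ∀ t ∈ Ioo (0 : ℝ) 1,
      ⟪f' (z + t • d), d⟫ ≤ ⟪f' (z + (0 : ℝ) • d), d⟫ + L * ‖d‖ ^ 2 * t := by
    intro t ht
    have hlip : ‖f' (z + t • d) - f' z‖ ≤ L * (t * ‖d‖) := by
      simpa [norm_smul, abs_of_pos ht.1] using hL.norm_sub_le (z + t • d) z
    have := real_inner_le_norm (f' (z + t • d) - f' z) d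
    rw [inner_sub_left] at this
    rw [zero_smul, add_zero]
    nlinarith [mul_le_mul_of_nonneg_right hlip (norm_nonneg d)]
  have := le_add_deriv_add_of_deriv_le_add_mul hderiv hslope
  simp only [one_smul, zero_smul, add_zero, d, add_sub_cancel] at this
  linarith

lemma ConvexOn.le_add_inner_gradient_add_sq (hconv : ConvexOn ℝ univ f)
    (hf : ∀ x, HasGradientAt f (f' x) x) (hL : LipschitzWith L f') (x y z : E) :
    f z ≤ f y + ⟪f' x, z - y⟫ + L / 2 * ‖z - x‖ ^ 2 := by
  have hlower := hconv.add_inner_gradient_le (hf x) y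
  have hupper := le_add_inner_gradient_add_sq_of_lipschitzWith hf hL x z
  have hsplit : ⟪f' x, z - y⟫ = ⟪f' x, z - x⟫ - ⟪f' x, y - x⟫ := by
    rw [← inner_sub_right, sub_sub_sub_cancel_right]
  linarith

end Gradient

theorem svrg_one_step_ineq {p : ℕ} (L η : ℝ) (hη : 0 < η) (hηL : η ≤ 1 / L) (hL : 0 < L)
    (F r : EuclideanSpace ℝ (Fin p) → ℝ)
    (gradF : EuclideanSpace ℝ (Fin p) → EuclideanSpace ℝ (Fin p))
    (hFconv : ConvexOn ℝ Set.univ F)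
    (hrconv : ConvexOn ℝ Set.univ r)
    (hdiff : ∀ x, HasGradientAt F (gradF x) x)
    (hLip : LipschitzWith (Real.toNNReal L) gradF)
    (x xstar v xplus : EuclideanSpace ℝ (Fin p))
    (hxplus : ∀ u : EuclideanSpace ℝ (Fin p),
      (1 / 2) * ‖xplus - (x - η • v)‖ ^ 2 + η * r xplus ≤
        (1 / 2) * ‖u - (x - η • v)‖ ^ 2 + η * r u) :
    ‖xplus - xstar‖ ^ 2 ≤ ‖x - xstar‖ ^ 2 -
        2 * η * ((F xplus + r xplus) - (F xstar + r xstar)) -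
        2 * η * ⟪v - gradF x, xplus - xstar⟫ := by
  have hsmooth := hFconv.le_add_inner_gradient_add_sq hdiff hLip x xstar xplus
  rw [Real.coe_toNNReal L hL.le] at hsmooth
  have hprox := (hrconv.smul hη.le).half_sq_norm_add_le_of_isMinOn
    (isMinOn_univ_iff.2 hxplus) xstar
  rw [norm_sub_sub_smul_sq, norm_sub_sub_smul_sq, norm_sub_rev xstar xplus,
    smul_eq_mul, smul_eq_mul] at hprox
  have hstep : η * L * ‖xplus - x‖ ^ 2 ≤ ‖xplus - x‖ ^ 2 :=
    mul_le_of_le_one_left (by positivity) ((le_div_iff₀ hL).1 hηL)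
  have hinner : ⟪v - gradF x, xplus - xstar⟫
      = ⟪v, xplus - x⟫ - ⟪v, xstar - x⟫ - ⟪gradF x, xplus - xstar⟫ := by
    rw [inner_sub_left, ← inner_sub_right, sub_sub_sub_cancel_right]
  rw [hinner, norm_sub_rev x xstar]
  linarith [mul_le_mul_of_nonneg_left hsmooth (by positivity : (0 : ℝ) ≤ 2 * η)]
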